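/- Let X ~ Exp(1), c = μσ_d²/(P_max − (μ+1)P_Δ), ρ₂ = (μ+1)P_Δ h + σ_s², ρ₃ = P_max h + σ_s², with h > 0 and P_max > (μ+1)P_Δ > 0. Then for ρ₂ ≤ τ ≤ ρ₃, the conditional probability P[(μσ_d²/X + (μ+1)P_Δ) h + σ_s² < τ | X ≥ c] equals exp(μσ_d²(1/(P_max − (μ+1)P_Δ) − h/(τ − ρ₂))) for τ > ρ₂ (interpreting the expression as 0 when τ = ρ₂), it equals 0 for τ < ρ₂, and equals 1 for τ > ρ₃. -/

import Mathlib

/-!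
Since `(K / x + a) * h + σ = K * h / x + ρ₂` (with `K = μσ_d²`, `a = (μ+1)P_Δ`), on `{X ≥ c}`,
`c > 0`, the event is `{X > K h / (τ - ρ₂)}` when `τ > ρ₂`, empty when `τ ≤ ρ₂`, and all of
`{X ≥ c}` when `τ > ρ₃ = K h / c + ρ₂`. In the middle range `K h / (τ - ρ₂) ≥ c`, and the
memorylessness of `Exp(1)` gives the conditional probability `exp (-(K h / (τ - ρ₂) - c))`.
-/

open Real MeasureTheory ProbabilityTheory Set

namespace ProbabilityTheory

variable {r : ℝ}

lemma expMeasure_singleton (r a : ℝ) : expMeasure r {a} = 0 :=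
  withDensity_absolutelyContinuous _ _ Real.volume_singleton

lemma expMeasure_Ioi (hr : 0 < r) {a : ℝ} (ha : 0 ≤ a) :
    expMeasure r (Ioi a) = ENNReal.ofReal (exp (-(r * a))) := by
  have := isProbabilityMeasure_expMeasure hr
  have he : 0 ≤ 1 - exp (-(r * a)) :=
    sub_nonneg.mpr (exp_le_one_iff.mpr (neg_nonpos.mpr (mul_nonneg hr.le ha)))
  rw [← compl_Iic, prob_compl_eq_one_sub measurableSet_Iic, ← ofReal_cdf,
    cdf_expMeasure_eq hr, if_pos ha, ← ENNReal.ofReal_one, ← ENNReal.ofReal_sub _ he,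
    sub_sub_cancel]

lemma expMeasure_Ici (hr : 0 < r) {a : ℝ} (ha : 0 ≤ a) :
    expMeasure r (Ici a) = ENNReal.ofReal (exp (-(r * a))) := by
  rw [← measure_congr (Ioi_ae_eq_Ici' (expMeasure_singleton r a)), expMeasure_Ioi hr ha]

/-- Memorylessness of the exponential distribution. -/
lemma expMeasure_cond_Ici_Ioi (hr : 0 < r) {b c : ℝ} (hc : 0 ≤ c) (hcb : c ≤ b) :
    (expMeasure r)[Ioi b | Ici c] = ENNReal.ofReal (exp (-(r * (b - c)))) := by
  rw [cond_apply measurableSet_Ici, inter_eq_right.mpr (Ioi_subset_Ici hcb),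
    expMeasure_Ici hr hc, expMeasure_Ioi hr (hc.trans hcb),
    ← ENNReal.ofReal_inv_of_pos (exp_pos _), ← ENNReal.ofReal_mul (by positivity),
    ← exp_neg, ← exp_add]
  ring_nf

end ProbabilityTheory

section ReciprocalEvent

variable {μ : Measure ℝ} {k c ρ τ : ℝ}

lemma Ici_inter_div_add_lt_of_le (hc : 0 < c) (hk : 0 < k) (hτ : τ ≤ ρ) :
    Ici c ∩ {x | k / x + ρ < τ} = ∅ := by
  refine eq_empty_of_forall_notMem fun x ⟨hx, hxτ⟩ => ?_
  have : 0 < k / x := div_pos hk (hc.trans_le hx)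
  exact absurd hxτ (by simp only [mem_ofPred_eq]; linarith)

lemma Ici_inter_div_add_lt_of_lt (hc : 0 < c) (hρτ : ρ < τ) :
    Ici c ∩ {x | k / x + ρ < τ} = Ici c ∩ Ioi (k / (τ - ρ)) := by
  ext x
  simp only [mem_inter_iff, mem_Ici, mem_ofPred_eq, mem_Ioi, and_congr_right_iff]
  intro hx
  rw [← lt_sub_iff_add_lt, div_lt_comm₀ (hc.trans_le hx) (sub_pos.mpr hρτ)]

lemma Ici_inter_div_add_lt_of_div_add_lt (hc : 0 < c) (hk : 0 < k) (hτ : k / c + ρ < τ) :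
    Ici c ∩ {x | k / x + ρ < τ} = Ici c := by
  refine inter_eq_left.mpr fun x hx => ?_
  have : k / x ≤ k / c := div_le_div_of_nonneg_left hk.le hc hx
  simp only [mem_ofPred_eq]
  linarith

lemma cond_Ici_div_add_lt_of_le (hc : 0 < c) (hk : 0 < k) (hτ : τ ≤ ρ) :
    μ[{x | k / x + ρ < τ} | Ici c] = 0 := by
  rw [← cond_inter_self measurableSet_Ici, Ici_inter_div_add_lt_of_le hc hk hτ, measure_empty]

lemma cond_Ici_div_add_lt_of_div_add_lt (hc : 0 < c) (hk : 0 < k) (hτ : k / c + ρ < τ)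
    (h₀ : μ (Ici c) ≠ 0) (h_top : μ (Ici c) ≠ ⊤) :
    μ[{x | k / x + ρ < τ} | Ici c] = 1 := by
  rw [← cond_inter_self measurableSet_Ici, Ici_inter_div_add_lt_of_div_add_lt hc hk hτ,
    cond_apply_self h₀ h_top]

lemma expMeasure_cond_Ici_div_add_lt (hr : 0 < r) (hc : 0 < c) (hρτ : ρ < τ)
    (hcb : c ≤ k / (τ - ρ)) :
    (expMeasure r)[{x | k / x + ρ < τ} | Ici c] =
      ENNReal.ofReal (exp (-(r * (k / (τ - ρ) - c)))) := by
  rw [← cond_inter_self measurableSet_Ici, Ici_inter_div_add_lt_of_lt hc hρτ,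
    cond_inter_self measurableSet_Ici, expMeasure_cond_Ici_Ioi hr hc.le hcb]

end ReciprocalEvent
theorem stmt_4_general (μ σd2 σs2 Pmax PΔ h : ℝ)
    (hμ : μ > 0) (hσd : σd2 > 0) (hh : h > 0)
    (hP : Pmax > (μ + 1) * PΔ) :
    let c := μ * σd2 / (Pmax - (μ + 1) * PΔ)
    let ρ₂ := (μ + 1) * PΔ * h + σs2
    let ρ₃ := Pmax * h + σs2
    let ν := (expMeasure 1)[|{x : ℝ | c ≤ x}]
    ∀ τ : ℝ,
      (ρ₂ < τ → τ ≤ ρ₃ →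
        ν {x : ℝ | (μ * σd2 / x + (μ + 1) * PΔ) * h + σs2 < τ} =
          ENNReal.ofReal
            (Real.exp (μ * σd2 * (1 / (Pmax - (μ + 1) * PΔ) - h / (τ - ρ₂))))) ∧
      (τ = ρ₂ → ν {x : ℝ | (μ * σd2 / x + (μ + 1) * PΔ) * h + σs2 < τ} = 0) ∧
      (τ < ρ₂ → ν {x : ℝ | (μ * σd2 / x + (μ + 1) * PΔ) * h + σs2 < τ} = 0) ∧
      (τ > ρ₃ → ν {x : ℝ | (μ * σd2 / x + (μ + 1) * PΔ) * h + σs2 < τ} = 1) := by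
  intro c ρ₂ ρ₃ ν τ
  have hgap : 0 < Pmax - (μ + 1) * PΔ := sub_pos.mpr hP
  have hK : 0 < μ * σd2 := mul_pos hμ hσd
  have hk : 0 < μ * σd2 * h := mul_pos hK hh
  have hc : 0 < c := div_pos hK hgap
  have hevent : {x : ℝ | (μ * σd2 / x + (μ + 1) * PΔ) * h + σs2 < τ} =
      {x | μ * σd2 * h / x + ρ₂ < τ} := by
    ext x
    simp only [mem_ofPred_eq, ρ₂]
    ring_nf
  have hρ₃ : μ * σd2 * h / c + ρ₂ = ρ₃ := by
    simp only [c, ρ₂, ρ₃]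
    field_simp
    ring
  have hIci : {x : ℝ | c ≤ x} = Ici c := rfl
  simp only [ν, hevent, hIci]
  refine ⟨fun hτ₂ hτ₃ => ?_, fun hτ => cond_Ici_div_add_lt_of_le hc hk hτ.le,
    fun hτ => cond_Ici_div_add_lt_of_le hc hk hτ.le, fun hτ => ?_⟩
  · have hcb : c ≤ μ * σd2 * h / (τ - ρ₂) := by
      rw [← hρ₃] at hτ₃
      rw [le_div_iff₀ (sub_pos.mpr hτ₂), ← le_div_iff₀' hc]
      linarith
    rw [expMeasure_cond_Ici_div_add_lt one_pos hc hτ₂ hcb]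
    congr 2
    ring
  · have := isProbabilityMeasure_expMeasure one_pos
    have hpos : expMeasure 1 (Ici c) ≠ 0 := by
      simp [expMeasure_Ici one_pos hc.le, exp_pos]
    exact cond_Ici_div_add_lt_of_div_add_lt hc hk (hρ₃ ▸ hτ) hpos (measure_ne_top _ _)

theorem stmt_4 (μ σd2 σs2 Pmax PΔ h : ℝ)
    (hμ : μ > 0) (hσd : σd2 > 0) (hσs : σs2 > 0) (hh : h > 0)
    (hPΔ : (μ + 1) * PΔ > 0) (hP : Pmax > (μ + 1) * PΔ) :
    let c := μ * σd2 / (Pmax - (μ + 1) * PΔ)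
    let ρ₂ := (μ + 1) * PΔ * h + σs2
    let ρ₃ := Pmax * h + σs2
    let ν := (expMeasure 1)[|{x : ℝ | c ≤ x}]
    ∀ τ : ℝ,
      (ρ₂ < τ → τ ≤ ρ₃ →
        ν {x : ℝ | (μ * σd2 / x + (μ + 1) * PΔ) * h + σs2 < τ} =
          ENNReal.ofReal
            (Real.exp (μ * σd2 * (1 / (Pmax - (μ + 1) * PΔ) - h / (τ - ρ₂))))) ∧
      (τ = ρ₂ → ν {x : ℝ | (μ * σd2 / x + (μ + 1) * PΔ) * h + σs2 < τ} = 0) ∧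
      (τ < ρ₂ → ν {x : ℝ | (μ * σd2 / x + (μ + 1) * PΔ) * h + σs2 < τ} = 0) ∧
      (τ > ρ₃ → ν {x : ℝ | (μ * σd2 / x + (μ + 1) * PΔ) * h + σs2 < τ} = 1) :=
  stmt_4_general μ σd2 σs2 Pmax PΔ h hμ hσd hh hP
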